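/- (Linear independence of the Abelian integrals I_0, I_2 and I'_4.) If a, b, c are real numbers such that a·I_0(h) + b·I_2(h) + c·I'_4(h) = 0 for every h > 0, then a = b = c = 0. -/

import Mathlib

open Real Set Filter intervalIntegral

/-- Right endpoint of the exterior oval: `x_max(h) = √(1 + √(1+4h))`. -/
noncomputable def xmax (h : ℝ) : ℝ := Real.sqrt (1 + Real.sqrt (1 + 4*h))

/-- Complete elliptic integral `I_i(h) = ∫_{-x_max}^{x_max} x^i √(2h + x² - x⁴/2) dx`. -/
noncomputable def ellI (i : ℕ) (h : ℝ) : ℝ :=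
  ∫ x in (-xmax h)..(xmax h), x^i * Real.sqrt (2*h + x^2 - x^4/2)

/-- Complete elliptic integral `I'_i(h) = ∫_{-x_max}^{x_max} x^i (2h + x² - x⁴/2)^{-1/2} dx`. -/
noncomputable def ellI' (i : ℕ) (h : ℝ) : ℝ :=
  ∫ x in (-xmax h)..(xmax h), x^i / Real.sqrt (2*h + x^2 - x^4/2)

/-!
Differentiating `x √F(x)`, where `F(x) = 2h + x² - x⁴/2` vanishes at `±x_max(h)`, gives
`I'₄ = I₀ + I'₂`, so the hypothesis becomes `(a + c) I₀ + b I₂ + c I'₂ = 0`. Along `h = q⁴ → ∞`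
the integrals `I₂`, `I₀` and `I'₂` have orders `q⁵`, `q³` and at most `q²`; the last bound holds
because `F(x) ≥ (x_max² - 2)/2 · (x_max² - x²)` and `∫ (x_max² - x²)^(-1/2) dx = π`. Hence `b = 0`,
then `a + c = 0`, and finally `c = 0` since `I'₂ > 0`.
-/

open MeasureTheory Asymptotics

section InvSqrt

variable {m : ℝ}

lemma hasDerivAt_arcsin_div (hm : 0 < m) {x : ℝ} (hx : x ∈ Ioo (-m) m) :
    HasDerivAt (fun y => arcsin (y / m)) (√(m ^ 2 - x ^ 2))⁻¹ x := by
  have h₁ : x / m ≠ -1 := by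
    rw [ne_eq, div_eq_iff hm.ne']; linarith [hx.1]
  have h₂ : x / m ≠ 1 := by
    rw [ne_eq, div_eq_iff hm.ne']; linarith [hx.2]
  refine ((hasDerivAt_arcsin h₁ h₂).comp x ((hasDerivAt_id x).div_const m)).congr_deriv ?_
  rw [show m ^ 2 - x ^ 2 = m ^ 2 * (1 - (x / m) ^ 2) by field_simp, sqrt_mul (sq_nonneg m),
    sqrt_sq hm.le]
  field_simp

lemma intervalIntegrable_inv_sqrt_sq_sub (hm : 0 < m) :
    IntervalIntegrable (fun x => (√(m ^ 2 - x ^ 2))⁻¹) volume (-m) m := by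
  refine intervalIntegrable_deriv_of_nonneg (g := fun y => arcsin (y / m))
    (by fun_prop) ?_ ?_
  · rw [min_eq_left (neg_le_self hm.le), max_eq_right (neg_le_self hm.le)]
    exact fun x hx => hasDerivAt_arcsin_div hm hx
  · exact fun x _ => inv_nonneg.2 (sqrt_nonneg _)

lemma integral_inv_sqrt_sq_sub (hm : 0 < m) :
    ∫ x in (-m)..m, (√(m ^ 2 - x ^ 2))⁻¹ = π := by
  rw [integral_eq_sub_of_hasDerivAt_of_le (by linarith) (by fun_prop)
    (fun x hx => hasDerivAt_arcsin_div hm hx) (intervalIntegrable_inv_sqrt_sq_sub hm)]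
  simp [neg_div, div_self hm.ne', arcsin_one]

end InvSqrt

lemma intervalIntegral_pos_of_pos_on_subinterval {f : ℝ → ℝ} {a b c d : ℝ} (hac : a ≤ c)
    (hcd : c < d) (hdb : d ≤ b) (hf : IntervalIntegrable f volume a b) (hnn : ∀ x, 0 ≤ f x)
    (hpos : ∀ x ∈ Ioo c d, 0 < f x) : 0 < ∫ x in a..b, f x := by
  have hfcd : IntervalIntegrable f volume c d := hf.mono_set <| by
    rw [uIcc_of_le hcd.le, uIcc_of_le (hac.trans (hcd.le.trans hdb))]
    exact Icc_subset_Icc hac hdb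
  exact (intervalIntegral_pos_of_pos_on hfcd hpos hcd).trans_le
    (integral_mono_interval hac hcd.le hdb (Eventually.of_forall hnn) hf)

theorem eq_zero_of_mul_add_isLittleO {α 𝕜 : Type*} [NormedField 𝕜] {l : Filter α}
    {f g : α → 𝕜} {b : 𝕜} (hg : g =o[l] f) (hf : ∃ᶠ x in l, f x ≠ 0)
    (h : ∀ᶠ x in l, b * f x + g x = 0) : b = 0 := by
  by_contra hb
  refine isLittleO_irrefl hf ((hg.const_mul_left (-b⁻¹)).congr' ?_ EventuallyEq.rfl)
  filter_upwards [h] with x hx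
  rw [eq_neg_of_add_eq_zero_right hx]
  field_simp

noncomputable def radicand (h x : ℝ) : ℝ := 2 * h + x ^ 2 - x ^ 4 / 2

@[fun_prop]
lemma continuous_radicand (h : ℝ) : Continuous (radicand h) := by
  unfold radicand; fun_prop

lemma hasDerivAt_radicand (h x : ℝ) : HasDerivAt (radicand h) (2 * x - 2 * x ^ 3) x :=
  (((hasDerivAt_pow 2 x).const_add (2 * h)).sub
    ((hasDerivAt_pow 4 x).div_const 2)).congr_deriv (by push_cast; ring)

lemma radicand_le (h x : ℝ) : radicand h x ≤ 2 * h + 1 / 2 := by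
  unfold radicand; nlinarith [sq_nonneg (x ^ 2 - 1)]

section Oval

variable {h : ℝ}

lemma xmax_sq (hh : 0 ≤ h) : xmax h ^ 2 = 1 + √(1 + 4 * h) :=
  sq_sqrt (by positivity)

lemma two_lt_xmax_sq (hh : 0 < h) : 2 < xmax h ^ 2 := by
  rw [xmax_sq hh.le]
  linarith [lt_sqrt_of_sq_lt (show (1 : ℝ) ^ 2 < 1 + 4 * h by linarith)]

lemma xmax_pos (hh : 0 < h) : 0 < xmax h :=
  sqrt_pos.2 (by positivity)

lemma radicand_eq_mul (hh : 0 ≤ h) (x : ℝ) :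
    radicand h x = (xmax h ^ 2 - x ^ 2) * (x ^ 2 + xmax h ^ 2 - 2) / 2 := by
  have hs : √(1 + 4 * h) ^ 2 = 1 + 4 * h := sq_sqrt (by positivity)
  rw [radicand, xmax_sq hh]
  linear_combination (-1 / 2 : ℝ) * hs

lemma radicand_eq_zero (hh : 0 ≤ h) {x : ℝ} (hx : x ^ 2 = xmax h ^ 2) : radicand h x = 0 := by
  rw [radicand_eq_mul hh, hx, sub_self, zero_mul, zero_div]

lemma radicand_pos (hh : 0 < h) {x : ℝ} (hx : x ∈ Ioo (-xmax h) (xmax h)) :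
    0 < radicand h x := by
  have hx2 : x ^ 2 < xmax h ^ 2 := sq_lt_sq' hx.1 hx.2
  rw [radicand_eq_mul hh.le]
  have := two_lt_xmax_sq hh
  exact div_pos (mul_pos (by linarith) (by linarith [sq_nonneg x])) two_pos

lemma abs_pow_div_sqrt_radicand_le (hh : 0 < h) (i : ℕ) {x : ℝ} (hx : |x| ≤ xmax h) :
    |x ^ i / √(radicand h x)| ≤
      xmax h ^ i / √((xmax h ^ 2 - 2) / 2) * (√(xmax h ^ 2 - x ^ 2))⁻¹ := by
  set m := xmax h
  have hκ : 0 < (m ^ 2 - 2) / 2 := by linarith [two_lt_xmax_sq hh]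
  have hxm : x ^ 2 ≤ m ^ 2 := sq_le_sq' (abs_le.1 hx).1 (abs_le.1 hx).2
  rcases hxm.eq_or_lt with heq | hlt
  · rw [radicand_eq_zero hh.le heq, sqrt_zero, div_zero, abs_zero]
    exact mul_nonneg (div_nonneg (pow_nonneg (xmax_pos hh).le i) (sqrt_nonneg _))
      (inv_nonneg.2 (sqrt_nonneg _))
  · have hle : (m ^ 2 - 2) / 2 * (m ^ 2 - x ^ 2) ≤ radicand h x := by
      rw [radicand_eq_mul hh.le]; nlinarith [sq_nonneg x]
    have hprod : 0 < (m ^ 2 - 2) / 2 * (m ^ 2 - x ^ 2) := mul_pos hκ (by linarith)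
    rw [abs_div, abs_pow, abs_of_nonneg (sqrt_nonneg _)]
    calc |x| ^ i / √(radicand h x) ≤ m ^ i / √((m ^ 2 - 2) / 2 * (m ^ 2 - x ^ 2)) :=
          div_le_div₀ (pow_nonneg (xmax_pos hh).le i) (pow_le_pow_left₀ (abs_nonneg x) hx i)
            (sqrt_pos.2 hprod) (sqrt_le_sqrt hle)
      _ = _ := by rw [sqrt_mul hκ.le, ← div_div, div_eq_mul_inv]

lemma intervalIntegrable_pow_div_sqrt_radicand (hh : 0 < h) (i : ℕ) :
    IntervalIntegrable (fun x => x ^ i / √(radicand h x)) volume (-xmax h) (xmax h) := by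
  refine ((intervalIntegrable_inv_sqrt_sq_sub (xmax_pos hh)).const_mul
    (xmax h ^ i / √((xmax h ^ 2 - 2) / 2))).mono_fun'
    (Measurable.aestronglyMeasurable (by fun_prop)) ?_
  rw [uIoc_of_le (neg_le_self (xmax_pos hh).le)]
  filter_upwards [ae_restrict_mem measurableSet_Ioc] with x hx
  exact abs_pow_div_sqrt_radicand_le hh i (abs_le.2 ⟨hx.1.le, hx.2⟩)

lemma abs_ellI'_le (hh : 0 < h) (i : ℕ) :
    |ellI' i h| ≤ π * xmax h ^ i / √((xmax h ^ 2 - 2) / 2) := by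
  have hm := xmax_pos hh
  rw [← Real.norm_eq_abs]
  calc ‖ellI' i h‖
      ≤ ∫ x in (-xmax h)..(xmax h),
          xmax h ^ i / √((xmax h ^ 2 - 2) / 2) * (√(xmax h ^ 2 - x ^ 2))⁻¹ :=
        norm_integral_le_of_norm_le (neg_le_self hm.le)
          (Eventually.of_forall fun x hx =>
            abs_pow_div_sqrt_radicand_le hh i (abs_le.2 ⟨hx.1.le, hx.2⟩))
          ((intervalIntegrable_inv_sqrt_sq_sub hm).const_mul _)
    _ = _ := by rw [intervalIntegral.integral_const_mul, integral_inv_sqrt_sq_sub hm]; ring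

lemma hasDerivAt_mul_sqrt_radicand {x : ℝ} (hF : 0 < radicand h x) :
    HasDerivAt (fun y => y * √(radicand h y))
      (√(radicand h x) + x ^ 2 / √(radicand h x) - x ^ 4 / √(radicand h x)) x := by
  refine ((hasDerivAt_id x).mul ((hasDerivAt_radicand h x).sqrt hF.ne')).congr_deriv ?_
  have := (sqrt_pos.2 hF).ne'
  simp only [id]
  field_simp
  ring

theorem ellI'_four_eq (hh : 0 < h) : ellI' 4 h = ellI 0 h + ellI' 2 h := by
  have hm := xmax_pos hh
  have hI0 : IntervalIntegrable (fun x => √(radicand h x)) volume (-xmax h) (xmax h) :=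
    (by fun_prop : Continuous _).intervalIntegrable _ _
  have hI2 := intervalIntegrable_pow_div_sqrt_radicand hh 2
  have hI4 := intervalIntegrable_pow_div_sqrt_radicand hh 4
  have hFTC := integral_eq_sub_of_hasDerivAt_of_le (neg_le_self hm.le) (by fun_prop)
    (fun x hx => hasDerivAt_mul_sqrt_radicand (radicand_pos hh hx)) ((hI0.add hI2).sub hI4)
  rw [integral_sub (hI0.add hI2) hI4, integral_add hI0 hI2,
    radicand_eq_zero hh.le (neg_sq _), radicand_eq_zero hh.le rfl] at hFTC
  simp only [radicand, sqrt_zero, mul_zero, sub_zero] at hFTC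
  simp only [ellI, ellI', pow_zero, one_mul]
  linarith

lemma ellI_pos {i : ℕ} (hi : Even i) (hh : 0 < h) : 0 < ellI i h :=
  intervalIntegral_pos_of_pos_on_subinterval (neg_nonpos.2 (xmax_pos hh).le) (xmax_pos hh)
    le_rfl ((by fun_prop : Continuous _).intervalIntegrable _ _)
    (fun x => mul_nonneg (hi.pow_nonneg x) (sqrt_nonneg _))
    (fun x hx => mul_pos (pow_pos hx.1 i)
      (sqrt_pos.2 (radicand_pos hh ⟨by linarith [hx.1, xmax_pos hh], hx.2⟩)))

lemma ellI'_pos {i : ℕ} (hi : Even i) (hh : 0 < h) : 0 < ellI' i h :=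
  intervalIntegral_pos_of_pos_on_subinterval (neg_nonpos.2 (xmax_pos hh).le) (xmax_pos hh)
    le_rfl (intervalIntegrable_pow_div_sqrt_radicand hh i)
    (fun x => div_nonneg (hi.pow_nonneg x) (sqrt_nonneg _))
    (fun x hx => div_pos (pow_pos hx.1 i)
      (sqrt_pos.2 (radicand_pos hh ⟨by linarith [hx.1, xmax_pos hh], hx.2⟩)))

end Oval

lemma le_xmax_pow_four (q : ℝ) : q ≤ xmax (q ^ 4) := by
  have : 2 * q ^ 2 ≤ √(1 + 4 * q ^ 4) := le_sqrt_of_sq_le (by nlinarith)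
  exact le_sqrt_of_sq_le (by linarith [sq_nonneg q])

section PowFour

variable {q : ℝ}

lemma xmax_pow_four_le (hq : 1 ≤ q) : xmax (q ^ 4) ≤ 2 * q := by
  have : √(1 + 4 * q ^ 4) ≤ 2 * q ^ 2 + 1 := (sqrt_le_left (by positivity)).2 (by nlinarith)
  exact (sqrt_le_left (by linarith)).2 (by nlinarith)

lemma sq_le_sqrt_radicand_pow_four {x : ℝ} (hx : x ^ 2 ≤ q ^ 2) :
    q ^ 2 ≤ √(radicand (q ^ 4) x) := by
  have := pow_le_pow_left₀ (sq_nonneg x) hx 2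
  exact le_sqrt_of_sq_le (by unfold radicand; nlinarith)

lemma sqrt_radicand_pow_four_le (hq : 1 ≤ q) (x : ℝ) : √(radicand (q ^ 4) x) ≤ 2 * q ^ 2 :=
  (sqrt_le_left (by positivity)).2 <| by
    have : 1 ≤ q ^ 4 := one_le_pow₀ hq
    linarith [radicand_le (q ^ 4) x]

lemma pow_div_le_ellI_pow_four {i : ℕ} (hi : Even i) (hq : 0 ≤ q) :
    q ^ (i + 3) / (i + 1) ≤ ellI i (q ^ 4) := by
  calc q ^ (i + 3) / (i + 1) = ∫ x in (0 : ℝ)..q, q ^ 2 * x ^ i := by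
        rw [intervalIntegral.integral_const_mul, integral_pow]; field_simp; ring
    _ ≤ ∫ x in (0 : ℝ)..q, x ^ i * √(radicand (q ^ 4) x) :=
        integral_mono_on hq (Continuous.intervalIntegrable (by fun_prop) _ _)
          (Continuous.intervalIntegrable (by fun_prop) _ _) fun x hx => by
            rw [mul_comm]
            exact mul_le_mul_of_nonneg_left
              (sq_le_sqrt_radicand_pow_four (pow_le_pow_left₀ hx.1 hx.2 2)) (hi.pow_nonneg x)
    _ ≤ ellI i (q ^ 4) :=
        integral_mono_interval (by linarith [le_xmax_pow_four q]) hq (le_xmax_pow_four q)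
          (Eventually.of_forall fun x => mul_nonneg (hi.pow_nonneg x) (sqrt_nonneg _))
          (Continuous.intervalIntegrable (by fun_prop) _ _)

lemma abs_ellI_pow_four_le (i : ℕ) (hq : 1 ≤ q) : |ellI i (q ^ 4)| ≤ (2 * q) ^ (i + 3) := by
  have hm := xmax_pow_four_le hq
  have hm0 := xmax_pos (by positivity : 0 < q ^ 4)
  have hbound : ∀ x ∈ uIoc (-xmax (q ^ 4)) (xmax (q ^ 4)),
      ‖x ^ i * √(radicand (q ^ 4) x)‖ ≤ (2 * q) ^ i * (2 * q ^ 2) := by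
    intro x hx
    rw [uIoc_of_le (by linarith)] at hx
    rw [norm_mul, norm_pow, Real.norm_eq_abs, Real.norm_eq_abs, abs_of_nonneg (sqrt_nonneg _)]
    exact mul_le_mul
      (pow_le_pow_left₀ (abs_nonneg x) (abs_le.2 ⟨by linarith [hx.1], by linarith [hx.2]⟩) i)
      (sqrt_radicand_pow_four_le hq x) (sqrt_nonneg _) (by positivity)
  rw [← Real.norm_eq_abs]
  calc ‖ellI i (q ^ 4)‖ ≤ (2 * q) ^ i * (2 * q ^ 2) * |xmax (q ^ 4) - -xmax (q ^ 4)| :=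
        norm_integral_le_of_norm_le_const hbound
    _ ≤ (2 * q) ^ i * (2 * q ^ 2) * (4 * q) := by
        rw [abs_of_nonneg (by linarith)]; gcongr; linarith
    _ = (2 * q) ^ (i + 3) := by ring

end PowFour

lemma isBigO_ellI_pow_four (i : ℕ) :
    (fun q => ellI i (q ^ 4)) =O[atTop] fun q => q ^ (i + 3) :=
  IsBigO.of_bound (2 ^ (i + 3)) <| (eventually_ge_atTop 1).mono fun q hq => by
    rw [Real.norm_eq_abs, norm_pow, Real.norm_of_nonneg (by linarith), ← mul_pow]
    exact abs_ellI_pow_four_le i hq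

lemma isBigO_pow_ellI_pow_four {i : ℕ} (hi : Even i) :
    (fun q => q ^ (i + 3)) =O[atTop] fun q => ellI i (q ^ 4) :=
  IsBigO.of_bound (i + 1) <| (eventually_ge_atTop 0).mono fun q hq => by
    have hle := pow_div_le_ellI_pow_four hi hq
    have hI : 0 ≤ ellI i (q ^ 4) :=
      (by positivity : (0 : ℝ) ≤ q ^ (i + 3) / (i + 1)).trans hle
    rw [div_le_iff₀ (by positivity)] at hle
    rw [Real.norm_of_nonneg (by positivity), Real.norm_of_nonneg hI]
    linarith

lemma isBigO_ellI'_pow_four (i : ℕ) :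
    (fun q => ellI' i (q ^ 4)) =O[atTop] fun q => q ^ i :=
  IsBigO.of_bound (π * 2 ^ i) <| (eventually_ge_atTop 2).mono fun q hq => by
    have hqm := le_xmax_pow_four q
    have hκ : 1 ≤ √((xmax (q ^ 4) ^ 2 - 2) / 2) := le_sqrt_of_sq_le (by nlinarith)
    rw [Real.norm_eq_abs, norm_pow, Real.norm_of_nonneg (by linarith)]
    calc |ellI' i (q ^ 4)| ≤ π * xmax (q ^ 4) ^ i / √((xmax (q ^ 4) ^ 2 - 2) / 2) :=
          abs_ellI'_le (by positivity) i
      _ ≤ π * xmax (q ^ 4) ^ i :=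
          div_le_self (mul_nonneg pi_pos.le (pow_nonneg (by linarith) i)) hκ
      _ ≤ π * (2 * q) ^ i := mul_le_mul_of_nonneg_left
          (pow_le_pow_left₀ (by linarith) (xmax_pow_four_le (by linarith)) i) pi_pos.le
      _ = π * 2 ^ i * q ^ i := by ring

lemma isLittleO_ellI_zero_ellI_two :
    (fun q => ellI 0 (q ^ 4)) =o[atTop] fun q => ellI 2 (q ^ 4) :=
  (isBigO_ellI_pow_four 0).trans_isLittleO <|
    (isLittleO_pow_pow_atTop_of_lt (by norm_num)).trans_isBigO (isBigO_pow_ellI_pow_four even_two)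

lemma isLittleO_ellI'_two_ellI_zero :
    (fun q => ellI' 2 (q ^ 4)) =o[atTop] fun q => ellI 0 (q ^ 4) :=
  (isBigO_ellI'_pow_four 2).trans_isLittleO <|
    (isLittleO_pow_pow_atTop_of_lt (by norm_num)).trans_isBigO (isBigO_pow_ellI_pow_four Even.zero)

/-- Linear independence of the Abelian integrals `I₀`, `I₂` and `I₄'`. -/
theorem ellI_linear_independent_three (a b c : ℝ)
    (hzero : ∀ h : ℝ, 0 < h → a * ellI 0 h + b * ellI 2 h + c * ellI' 4 h = 0) :
    a = 0 ∧ b = 0 ∧ c = 0 := by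
  have hrel : ∀ h : ℝ, 0 < h → (a + c) * ellI 0 h + b * ellI 2 h + c * ellI' 2 h = 0 := by
    intro h hh
    have := hzero h hh
    rw [ellI'_four_eq hh] at this
    linarith
  have hrel_atTop : ∀ᶠ q : ℝ in atTop,
      (a + c) * ellI 0 (q ^ 4) + b * ellI 2 (q ^ 4) + c * ellI' 2 (q ^ 4) = 0 :=
    (eventually_gt_atTop 0).mono fun q hq => hrel _ (by positivity)
  have hfreq : ∀ i, Even i → ∃ᶠ q : ℝ in atTop, ellI i (q ^ 4) ≠ 0 := fun i hi =>
    ((eventually_gt_atTop 0).mono fun q hq => (ellI_pos hi (by positivity)).ne').frequently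
  have hb : b = 0 := eq_zero_of_mul_add_isLittleO
    ((isLittleO_ellI_zero_ellI_two.const_mul_left (a + c)).add
      ((isLittleO_ellI'_two_ellI_zero.trans isLittleO_ellI_zero_ellI_two).const_mul_left c))
    (hfreq 2 even_two) (hrel_atTop.mono fun q hq => by linarith)
  have hac : a + c = 0 := eq_zero_of_mul_add_isLittleO
    (isLittleO_ellI'_two_ellI_zero.const_mul_left c) (hfreq 0 Even.zero)
    (hrel_atTop.mono fun q hq => by rw [hb] at hq; linarith)
  have hc : c = 0 := by
    have h1 := hrel 1 one_pos
    rw [hb, hac] at h1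
    simpa [(ellI'_pos even_two one_pos).ne'] using h1
  exact ⟨by linarith, hb, hc⟩
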